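/- Let $N \geq 2$, $s \in (0,1)$ with $2s < N$, and suppose $M : [0,\infty) \to \mathbb{R}$ is continuous, nonnegative, and satisfies: $t \mapsto M(t)/t^{2s/(N-2s)}$ is nonincreasing on $(0,\infty)$. If for some $0 \leq t_1 < t_2$ one has $\widehat{M}(t_1) - (1-\tfrac{2s}{N})M(t_1)t_1 = \widehat{M}(t_2) - (1-\tfrac{2s}{N})M(t_2)t_2$, then $M(t_1)/t_1^{2s/(N-2s)} = M(t_2)/t_2^{2s/(N-2s)}$ (where for $t_1 = 0$ the claim is $M(t) = k_0 t^{2s/(N-2s)}$ on $[t_1,t_2]$ for some constant $k_0$). In particular, $M(t) = k_0\, t^{2s/(N-2s)}$ for all $t \in [t_1, t_2]$. -/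

import Mathlib

open MeasureTheory Set

/-!
With `c = M t₂ / t₂ ^ α`, antitonicity of `M t / t ^ α` gives `g t := M t - c t ^ α ≥ 0` on
`(0, t₂]`. Since `∫ τ ^ α = t ^ (α + 1) / (α + 1)` and `c t₂ ^ (α + 1) = M t₂ t₂`, the equality
of the two values of `∫₀ᵗ M - M t t / (α + 1)` becomes `∫_{t₁}^{t₂} g = -t₁ g t₁ / (α + 1) ≤ 0`,
so the continuous nonnegative `g` vanishes on `[t₁, t₂]`.
-/

lemma eqOn_zero_of_intervalIntegral_nonpos {g : ℝ → ℝ} {a b : ℝ} (hab : a < b)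
    (hg : ContinuousOn g (Icc a b)) (hg0 : ∀ x ∈ Ioc a b, 0 ≤ g x)
    (hint : ∫ x in a..b, g x ≤ 0) : ∀ x ∈ Icc a b, g x = 0 := by
  have hg0' : ∀ x ∈ Icc a b, 0 ≤ g x := by
    rw [← closure_Ioc hab.ne] at hg ⊢
    exact le_on_closure hg0 continuousOn_const hg
  intro x hx
  by_contra hne
  have hpos := intervalIntegral.integral_pos hab hg hg0 ⟨x, hx, (hg0' x hx).lt_of_ne' hne⟩
  linarith

lemma mul_rpow_le_of_antitoneOn_div_rpow {M : ℝ → ℝ} {α : ℝ}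
    (hM : AntitoneOn (fun t => M t / t ^ α) (Ioi 0)) {τ t : ℝ} (hτ : 0 < τ) (hτt : τ ≤ t) :
    M t / t ^ α * τ ^ α ≤ M τ :=
  (le_div_iff₀ (Real.rpow_pos_of_pos hτ α)).mp (hM hτ (hτ.trans_le hτt) hτt)

lemma intervalIntegral_sub_mul_rpow {M : ℝ → ℝ} (hM : Continuous M) {α : ℝ} (hα : -1 < α)
    {t₁ t₂ : ℝ} (ht₁ : 0 ≤ t₁) (ht₂ : 0 < t₂)
    (heq : (∫ τ in (0:ℝ)..t₁, M τ) - (α + 1)⁻¹ * M t₁ * t₁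
      = (∫ τ in (0:ℝ)..t₂, M τ) - (α + 1)⁻¹ * M t₂ * t₂) :
    ∫ τ in t₁..t₂, (M τ - M t₂ / t₂ ^ α * τ ^ α)
      = -(t₁ * (M t₁ - M t₂ / t₂ ^ α * t₁ ^ α)) / (α + 1) := by
  have hα1 : α + 1 ≠ 0 := by linarith
  have ht₂α : t₂ ^ α ≠ 0 := (Real.rpow_pos_of_pos ht₂ α).ne'
  have hIM : ∫ τ in t₁..t₂, M τ = (α + 1)⁻¹ * (M t₂ * t₂ - M t₁ * t₁) := by
    rw [← intervalIntegral.integral_interval_sub_left (hM.intervalIntegrable _ _)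
      (hM.intervalIntegrable _ _)]
    linear_combination -heq
  rw [intervalIntegral.integral_sub (hM.intervalIntegrable _ _)
      ((intervalIntegral.intervalIntegrable_rpow' hα).const_mul _),
    intervalIntegral.integral_const_mul, integral_rpow (Or.inl hα), hIM,
    Real.rpow_add_one' ht₂.le hα1, Real.rpow_add_one' ht₁ hα1]
  field_simp
  ring

theorem eqOn_mul_rpow_of_antitoneOn_of_eq {M : ℝ → ℝ} (hM : Continuous M) {α : ℝ} (hα : 0 ≤ α)
    (hMα : AntitoneOn (fun t => M t / t ^ α) (Ioi 0)) {t₁ t₂ : ℝ} (ht₁ : 0 ≤ t₁) (h12 : t₁ < t₂)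
    (heq : (∫ τ in (0:ℝ)..t₁, M τ) - (α + 1)⁻¹ * M t₁ * t₁
      = (∫ τ in (0:ℝ)..t₂, M τ) - (α + 1)⁻¹ * M t₂ * t₂) :
    ∀ t ∈ Icc t₁ t₂, M t = M t₂ / t₂ ^ α * t ^ α := by
  have ht₂ : 0 < t₂ := ht₁.trans_lt h12
  have hg0 : ∀ τ ∈ Ioc t₁ t₂, 0 ≤ M τ - M t₂ / t₂ ^ α * τ ^ α := fun τ hτ =>
    sub_nonneg.mpr (mul_rpow_le_of_antitoneOn_div_rpow hMα (ht₁.trans_lt hτ.1) hτ.2)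
  have ht₁g : 0 ≤ t₁ * (M t₁ - M t₂ / t₂ ^ α * t₁ ^ α) := by
    rcases ht₁.eq_or_lt with rfl | ht₁pos
    · simp
    · exact mul_nonneg ht₁ <| sub_nonneg.mpr
        (mul_rpow_le_of_antitoneOn_div_rpow hMα ht₁pos h12.le)
  have hint : ∫ τ in t₁..t₂, (M τ - M t₂ / t₂ ^ α * τ ^ α) ≤ 0 := by
    rw [intervalIntegral_sub_mul_rpow hM (by linarith) ht₁ ht₂ heq]
    exact div_nonpos_of_nonpos_of_nonneg (neg_nonpos.mpr ht₁g) (by positivity)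
  have hgc : Continuous fun τ => M τ - M t₂ / t₂ ^ α * τ ^ α :=
    hM.sub (continuous_const.mul (Real.continuous_rpow_const hα))
  intro t ht
  exact sub_eq_zero.mp (eqOn_zero_of_intervalIntegral_nonpos h12 hgc.continuousOn hg0 hint t ht)

theorem stmt5_general (N : ℕ) (s : ℝ) (hs0 : 0 < s)
    (h2s : 2 * s < N) (M : ℝ → ℝ) (hMc : Continuous M)
    (hM5 : AntitoneOn (fun t => M t / t ^ (2 * s / ((N:ℝ) - 2 * s))) (Ioi (0:ℝ)))
    (t1 t2 : ℝ) (ht1 : 0 ≤ t1) (h12 : t1 < t2)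
    (heq : (∫ τ in (0:ℝ)..t1, M τ) - (1 - 2 * s / (N:ℝ)) * M t1 * t1
      = (∫ τ in (0:ℝ)..t2, M τ) - (1 - 2 * s / (N:ℝ)) * M t2 * t2) :
    (0 < t1 → M t1 / t1 ^ (2 * s / ((N:ℝ) - 2 * s))
        = M t2 / t2 ^ (2 * s / ((N:ℝ) - 2 * s))) ∧
    ∃ k0 : ℝ, ∀ t ∈ Icc t1 t2, M t = k0 * t ^ (2 * s / ((N:ℝ) - 2 * s)) := by
  set α := 2 * s / ((N:ℝ) - 2 * s)
  have hNs : 0 < (N:ℝ) - 2 * s := by linarith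
  have hα : 0 ≤ α := by positivity
  have hk : 1 - 2 * s / (N:ℝ) = (α + 1)⁻¹ := by
    have : (N:ℝ) ≠ 0 := by linarith
    simp only [α]
    field_simp
    ring
  rw [hk] at heq
  have hpow := eqOn_mul_rpow_of_antitoneOn_of_eq hMc hα hM5 ht1 h12 heq
  refine ⟨fun ht1pos => ?_, _, hpow⟩
  rw [hpow t1 ⟨le_rfl, h12.le⟩, mul_div_cancel_right₀ _ (Real.rpow_pos_of_pos ht1pos α).ne']

/-- Equality in the (M5)/(M6) monotonicity forces `M` to be a pure power on `[t₁,t₂]`. -/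
theorem stmt5 (N : ℕ) (hN : 2 ≤ N) (s : ℝ) (hs0 : 0 < s) (hs1 : s < 1)
    (h2s : 2 * s < N) (M : ℝ → ℝ) (hMc : Continuous M)
    (hM0 : ∀ t ≥ (0:ℝ), 0 ≤ M t)
    (hM5 : AntitoneOn (fun t => M t / t ^ (2 * s / ((N:ℝ) - 2 * s))) (Ioi (0:ℝ)))
    (t1 t2 : ℝ) (ht1 : 0 ≤ t1) (h12 : t1 < t2)
    (heq : (∫ τ in (0:ℝ)..t1, M τ) - (1 - 2 * s / (N:ℝ)) * M t1 * t1
      = (∫ τ in (0:ℝ)..t2, M τ) - (1 - 2 * s / (N:ℝ)) * M t2 * t2) :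
    (0 < t1 → M t1 / t1 ^ (2 * s / ((N:ℝ) - 2 * s))
        = M t2 / t2 ^ (2 * s / ((N:ℝ) - 2 * s))) ∧
    ∃ k0 : ℝ, ∀ t ∈ Icc t1 t2, M t = k0 * t ^ (2 * s / ((N:ℝ) - 2 * s)) :=
  stmt5_general N s hs0 h2s M hMc hM5 t1 t2 ht1 h12 heq
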